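/- Let (X, ω) be a symplectic vector space and λ, μ linear subspaces with dim X/(λ+μ) < ∞ and dim X/(λ^ω+μ^ω) < ∞. Then (λ,μ) and (λ^ω,μ^ω) are Fredholm pairs and Index(λ,μ) + Index(λ^ω,μ^ω) ≤ 0, with equality if and only if λ+μ = (λ+μ)^{ωω}, λ^ω+μ^ω = (λ^ω+μ^ω)^{ωω}, and λ∩μ = λ^{ωω} ∩ μ^{ωω}. -/
import Mathlib


universe u

/-- The annihilator `λ^ω = {y ∈ X : ω(x,y) = 0 for all x ∈ λ}` of a subspace of a
complex vector space with a sesquilinear form `ω` (linear in the first,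
conjugate-linear in the second variable). -/
noncomputable def ann {X : Type*} [AddCommGroup X] [Module ℂ X]
    (ω : X →ₗ[ℂ] X →ₗ⋆[ℂ] ℂ) (l : Submodule ℂ X) : Submodule ℂ X :=
  ⨅ x ∈ l, LinearMap.ker (ω x)

namespace IndexProofAux

open Module Submodule

variable {X : Type*} [AddCommGroup X] [Module ℂ X] (ω : X →ₗ[ℂ] X →ₗ⋆[ℂ] ℂ)

lemma mem_ann {l : Submodule ℂ X} {y : X} : y ∈ ann ω l ↔ ∀ x ∈ l, ω x y = 0 := by
  simp [ann, Submodule.mem_iInf, LinearMap.mem_ker]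

lemma ann_sup (l m : Submodule ℂ X) : ann ω (l ⊔ m) = ann ω l ⊓ ann ω m := by
  ext y
  simp only [Submodule.mem_inf, mem_ann]
  constructor
  · exact fun h => ⟨fun x hx => h x (Submodule.mem_sup_left hx),
      fun x hx => h x (Submodule.mem_sup_right hx)⟩
  · rintro ⟨h1, h2⟩ x hx
    rcases Submodule.mem_sup.1 hx with ⟨a, ha, b, hb, rfl⟩
    rw [map_add, LinearMap.add_apply, h1 a ha, h2 b hb, add_zero]

lemma skew_zero_iff (hskew : ∀ x y, ω y x = - (starRingEnd ℂ) (ω x y)) {x y : X} :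
    ω y x = 0 ↔ ω x y = 0 := by
  rw [hskew x y]
  simp

lemma le_ann_ann (hskew : ∀ x y, ω y x = - (starRingEnd ℂ) (ω x y)) (l : Submodule ℂ X) :
    l ≤ ann ω (ann ω l) := fun x hx => by
  rw [mem_ann]
  intro y hy
  rw [skew_zero_iff ω hskew]
  exact (mem_ann ω).1 hy x hx

lemma right_nd (hskew : ∀ x y, ω y x = - (starRingEnd ℂ) (ω x y))
    (hnd : ∀ x, (∀ y, ω x y = 0) → x = 0) {y : X} (h : ∀ x, ω x y = 0) : y = 0 :=
  hnd y fun z => by rw [hskew z y, h z, map_zero, neg_zero]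

/-- remove the real part on the left slot using multiplication by `I`. -/
lemma left_all_zero {y : X} (p : Submodule ℂ X) (h : ∀ x ∈ p, (ω x y).re = 0) :
    ∀ x ∈ p, ω x y = 0 := by
  intro x hx
  have h1 := h x hx
  have h2 := h (Complex.I • x) (p.smul_mem _ hx)
  rw [map_smul, LinearMap.smul_apply, smul_eq_mul, Complex.mul_re, Complex.I_re,
    Complex.I_im] at h2
  apply Complex.ext h1
  simp only [zero_mul, one_mul, zero_sub, neg_eq_zero] at h2
  exact h2

/-- remove the real part on the right slot using multiplication by `I`. -/
lemma right_all_zero {x : X} (p : Submodule ℂ X) (h : ∀ y ∈ p, (ω x y).re = 0) :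
    ∀ y ∈ p, ω x y = 0 := by
  intro y hy
  have h1 := h y hy
  have h2 := h (Complex.I • y) (p.smul_mem _ hy)
  rw [LinearMap.map_smulₛₗ, Complex.conj_I, smul_eq_mul, neg_mul, Complex.neg_re,
    Complex.mul_re, Complex.I_re, Complex.I_im] at h2
  apply Complex.ext h1
  simp only [zero_mul, one_mul, zero_sub, neg_neg] at h2
  exact h2

/-- The real bilinear form `re (ω x y)`. -/
noncomputable def reB : X →ₗ[ℝ] X →ₗ[ℝ] ℝ where
  toFun x :=
    { toFun := fun y => (ω x y).re
      map_add' := fun y z => by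
        show (ω x (y + z)).re = (ω x y).re + (ω x z).re
        rw [map_add]; exact Complex.add_re _ _
      map_smul' := fun r y => by
        have : ω x (r • y) = (r : ℂ) * ω x y := by
          rw [← Complex.coe_smul, LinearMap.map_smulₛₗ, Complex.conj_ofReal, smul_eq_mul]
        simp [this, Complex.mul_re] }
  map_add' x x' := by
    ext y
    simp only [LinearMap.coe_mk, AddHom.coe_mk, LinearMap.add_apply]
    rw [map_add, LinearMap.add_apply]
    exact Complex.add_re _ _
  map_smul' r x := by
    ext y
    have : ω (r • x) y = (r : ℂ) * ω x y := by
      rw [← Complex.coe_smul, map_smul, LinearMap.smul_apply, smul_eq_mul]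
    simp [this, Complex.mul_re]

@[simp] lemma reB_apply (x y : X) : reB ω x y = (ω x y).re := rfl

/-- The obvious real-linear equivalence between a complex submodule and its
restriction of scalars. -/
noncomputable def resEquiv (p : Submodule ℂ X) : ↥(p.restrictScalars ℝ) ≃ₗ[ℝ] ↥p where
  toFun x := ⟨x.1, x.2⟩
  map_add' _ _ := rfl
  map_smul' _ _ := rfl
  invFun x := ⟨x.1, x.2⟩
  left_inv _ := rfl
  right_inv _ := rfl

lemma fd_complex (p : Submodule ℂ X) (h : FiniteDimensional ℝ ↥(p.restrictScalars ℝ)) :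
    FiniteDimensional ℂ ↥p := by
  haveI : FiniteDimensional ℝ ↥p := Module.Finite.equiv (resEquiv p)
  exact Module.Finite.of_restrictScalars_finite ℝ ℂ ↥p

/-- The core dimension computation. -/
lemma core (hskew : ∀ x y, ω y x = - (starRingEnd ℂ) (ω x y))
    (hnd : ∀ x, (∀ y, ω x y = 0) → x = 0)
    (N : Submodule ℂ X) [FiniteDimensional ℂ (X ⧸ N)] :
    FiniteDimensional ℂ ↥(ann ω N) ∧
    2 * finrank ℂ (X ⧸ N) =
      2 * finrank ℂ ↥(ann ω N) +
        finrank ℝ ↥(((ann ω (ann ω N)).restrictScalars ℝ).map (N.restrictScalars ℝ).mkQ) := by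
  classical
  set N' : Submodule ℝ X := N.restrictScalars ℝ with hN'def
  set W : Submodule ℝ X := (ann ω N).restrictScalars ℝ with hWdef
  haveI : FiniteDimensional ℝ (X ⧸ N) := FiniteDimensional.complexToReal _
  haveI hQ' : FiniteDimensional ℝ (X ⧸ N') :=
    Module.Finite.equiv (Submodule.Quotient.restrictScalarsEquiv ℝ N).symm
  -- injection of `W` into the dual of the quotient, proving `W` finite dimensional
  have hso : ∀ y : W, N' ≤ LinearMap.ker ((reB ω).flip (y : X)) := by
    intro y x hx
    have hx' : x ∈ N := hx
    have : ω x (y : X) = 0 := (mem_ann ω).1 y.2 x hx'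
    simp [LinearMap.mem_ker, this]
  let ψ : W →ₗ[ℝ] Module.Dual ℝ (X ⧸ N') :=
    { toFun := fun y => N'.liftQ ((reB ω).flip (y : X)) (hso y)
      map_add' := fun y z => by
        apply Submodule.linearMap_qext
        ext x
        simp
      map_smul' := fun r y => by
        apply Submodule.linearMap_qext
        ext x
        simp }
  have hψinj : Function.Injective ψ := by
    rw [← LinearMap.ker_eq_bot, eq_bot_iff]
    intro y hy
    rw [LinearMap.mem_ker] at hy
    have hre : ∀ x : X, (ω x (y : X)).re = 0 := by
      intro x
      have h' : (ψ y) (N'.mkQ x) = 0 := by rw [hy]; rfl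
      rw [show ψ y = N'.liftQ ((reB ω).flip (y : X)) (hso y) from rfl,
        Submodule.mkQ_apply, Submodule.liftQ_apply] at h'
      exact h'
    have h0 : (y : X) = 0 :=
      right_nd ω hskew hnd fun x => left_all_zero ω ⊤ (fun x _ => hre x) x trivial
    exact Submodule.mem_bot ℝ |>.2 (Subtype.ext h0)
  haveI hWfd : FiniteDimensional ℝ W := FiniteDimensional.of_injective ψ hψinj
  -- the pairing map from the quotient to the dual of `W`
  let θbig : X →ₗ[ℝ] Module.Dual ℝ W := W.subtype.dualMap.comp (reB ω)
  have hNker : N' ≤ LinearMap.ker θbig := by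
    intro x hx
    have hx' : x ∈ N := hx
    rw [LinearMap.mem_ker]
    ext y
    have hzero : ω x (y : X) = 0 := (mem_ann ω).1 y.2 x hx'
    show (ω x (y : X)).re = 0
    rw [hzero, Complex.zero_re]
  let Θ : (X ⧸ N') →ₗ[ℝ] Module.Dual ℝ W := N'.liftQ θbig hNker
  have hrange : LinearMap.range Θ = LinearMap.range θbig := N'.range_liftQ θbig hNker
  have hkerΘ : LinearMap.ker Θ = (LinearMap.ker θbig).map N'.mkQ := N'.ker_liftQ θbig hNker
  have hkerθbig : LinearMap.ker θbig = (ann ω (ann ω N)).restrictScalars ℝ := by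
    ext x
    simp only [LinearMap.mem_ker, Submodule.restrictScalars_mem]
    constructor
    · intro h
      rw [mem_ann]
      intro y hy
      rw [skew_zero_iff ω hskew]
      refine right_all_zero ω (ann ω N) (fun z hz => ?_) y hy
      exact congrArg (fun f => f (⟨z, hz⟩ : W)) h
    · intro h
      ext y
      have hzero : ω x (y : X) = 0 := by
        rw [← skew_zero_iff ω hskew]
        exact (mem_ann ω).1 h (y : X) y.2
      show (ω x (y : X)).re = 0
      rw [hzero, Complex.zero_re]
  -- the range of θbig is everything
  have hco : (LinearMap.range θbig).dualCoannihilator = ⊥ := by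
    rw [eq_bot_iff]
    intro y hy
    rw [Submodule.mem_dualCoannihilator] at hy
    have hre : ∀ x : X, (ω x (y : X)).re = 0 := fun x =>
      hy (θbig x) (LinearMap.mem_range_self _ x)
    have h0 : (y : X) = 0 :=
      right_nd ω hskew hnd fun x => left_all_zero ω ⊤ (fun x _ => hre x) x trivial
    exact Submodule.mem_bot ℝ |>.2 (Subtype.ext h0)
  have h1 : finrank ℝ ↥(LinearMap.range θbig) = finrank ℝ W := by
    have := Subspace.finrank_add_finrank_dualCoannihilator_eq (LinearMap.range θbig)
    rwa [hco, finrank_bot, add_zero] at this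
  have h2 := LinearMap.finrank_range_add_finrank_ker Θ
  have h3 : finrank ℝ (X ⧸ N') = 2 * finrank ℂ (X ⧸ N) :=
    (Submodule.Quotient.restrictScalarsEquiv ℝ N).finrank_eq.trans
      (finrank_real_of_complex _)
  have h4 : finrank ℝ W = 2 * finrank ℂ ↥(ann ω N) :=
    (resEquiv (ann ω N)).finrank_eq.trans (finrank_real_of_complex _)
  refine ⟨fd_complex (ann ω N) hWfd, ?_⟩
  rw [hrange, hkerΘ, hkerθbig, h3, h1, h4] at h2
  omega

/-- The deficiency term vanishes iff the double annihilator gives back `N`. -/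
lemma d_zero_iff (hskew : ∀ x y, ω y x = - (starRingEnd ℂ) (ω x y))
    (N : Submodule ℂ X) [FiniteDimensional ℂ (X ⧸ N)] :
    finrank ℝ ↥(((ann ω (ann ω N)).restrictScalars ℝ).map (N.restrictScalars ℝ).mkQ) = 0 ↔
      N = ann ω (ann ω N) := by
  haveI : FiniteDimensional ℝ (X ⧸ N) := FiniteDimensional.complexToReal _
  haveI : FiniteDimensional ℝ (X ⧸ N.restrictScalars ℝ) :=
    Module.Finite.equiv (Submodule.Quotient.restrictScalarsEquiv ℝ N).symm
  haveI : FiniteDimensional ℝ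
      ↥(((ann ω (ann ω N)).restrictScalars ℝ).map (N.restrictScalars ℝ).mkQ) :=
    FiniteDimensional.finiteDimensional_submodule _
  rw [Submodule.finrank_eq_zero]
  constructor
  · intro h
    refine le_antisymm (le_ann_ann ω hskew N) (fun x hx => ?_)
    have hmem : (N.restrictScalars ℝ).mkQ x ∈
        ((ann ω (ann ω N)).restrictScalars ℝ).map (N.restrictScalars ℝ).mkQ :=
      Submodule.mem_map_of_mem hx
    rw [h, Submodule.mem_bot, Submodule.mkQ_apply, Submodule.Quotient.mk_eq_zero] at hmem
    exact hmem
  · intro h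
    rw [eq_bot_iff]
    rintro q ⟨x, hx, rfl⟩
    have hx' : x ∈ N := h ▸ hx
    rw [Submodule.mem_bot, Submodule.mkQ_apply, Submodule.Quotient.mk_eq_zero]
    exact hx'

end IndexProofAux

open IndexProofAux Module in
/-- If `dim X/(λ+μ) < ∞` and `dim X/(λ^ω+μ^ω) < ∞`, then `(λ,μ)` and
`(λ^ω,μ^ω)` are Fredholm pairs, `Index(λ,μ) + Index(λ^ω,μ^ω) ≤ 0`, with equality
iff `λ+μ = (λ+μ)^{ωω}`, `λ^ω+μ^ω = (λ^ω+μ^ω)^{ωω}` and `λ∩μ = λ^{ωω}∩μ^{ωω}`. -/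
theorem index_add_index_ann_nonpos {X : Type*} [AddCommGroup X] [Module ℂ X]
    (ω : X →ₗ[ℂ] X →ₗ⋆[ℂ] ℂ)
    (hskew : ∀ x y, ω y x = - (starRingEnd ℂ) (ω x y))
    (hnd : ∀ x, (∀ y, ω x y = 0) → x = 0)
    (l m : Submodule ℂ X)
    [FiniteDimensional ℂ (X ⧸ (l ⊔ m))]
    [FiniteDimensional ℂ (X ⧸ (ann ω l ⊔ ann ω m))] :
    FiniteDimensional ℂ ↥(l ⊓ m) ∧
    FiniteDimensional ℂ ↥(ann ω l ⊓ ann ω m) ∧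
    ((Module.finrank ℂ ↥(l ⊓ m) : ℤ) - Module.finrank ℂ (X ⧸ (l ⊔ m))
        + ((Module.finrank ℂ ↥(ann ω l ⊓ ann ω m) : ℤ)
            - Module.finrank ℂ (X ⧸ (ann ω l ⊔ ann ω m))) ≤ 0) ∧
    ((Module.finrank ℂ ↥(l ⊓ m) : ℤ) - Module.finrank ℂ (X ⧸ (l ⊔ m))
        + ((Module.finrank ℂ ↥(ann ω l ⊓ ann ω m) : ℤ)
            - Module.finrank ℂ (X ⧸ (ann ω l ⊔ ann ω m))) = 0 ↔
      (l ⊔ m = ann ω (ann ω (l ⊔ m)) ∧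
       ann ω l ⊔ ann ω m = ann ω (ann ω (ann ω l ⊔ ann ω m)) ∧
       l ⊓ m = ann ω (ann ω l) ⊓ ann ω (ann ω m))) := by
  classical
  obtain ⟨fdS, hS⟩ := core ω hskew hnd (l ⊔ m)
  obtain ⟨fdA, hA⟩ := core ω hskew hnd (ann ω l ⊔ ann ω m)
  haveI := fdS
  haveI := fdA
  -- finite dimensionality of `ann l ⊓ ann m`
  have fdC : FiniteDimensional ℂ ↥(ann ω l ⊓ ann ω m) := by
    rw [← ann_sup]
    exact fdS
  -- `l ⊓ m ≤ ann (ann l ⊔ ann m)`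
  have hPle : l ⊓ m ≤ ann ω (ann ω l ⊔ ann ω m) := by
    rw [ann_sup]
    exact le_inf (le_trans inf_le_left (le_ann_ann ω hskew l))
      (le_trans inf_le_right (le_ann_ann ω hskew m))
  have fdI : FiniteDimensional ℂ ↥(l ⊓ m) := Submodule.finiteDimensional_of_le hPle
  haveI := fdI
  have hle : finrank ℂ ↥(l ⊓ m) ≤ finrank ℂ ↥(ann ω (ann ω l ⊔ ann ω m)) :=
    Submodule.finrank_mono hPle
  have hc : finrank ℂ ↥(ann ω (l ⊔ m)) = finrank ℂ ↥(ann ω l ⊓ ann ω m) := by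
    rw [ann_sup]
  have hd1 := d_zero_iff ω hskew (l ⊔ m)
  have hd2 := d_zero_iff ω hskew (ann ω l ⊔ ann ω m)
  constructor
  · exact fdI
  constructor
  · exact fdC
  rw [hc] at hS
  have hz3iff : finrank ℂ ↥(l ⊓ m) = finrank ℂ ↥(ann ω (ann ω l ⊔ ann ω m)) ↔
      l ⊓ m = ann ω (ann ω l ⊔ ann ω m) := by
    constructor
    · intro h
      exact Submodule.eq_of_le_of_finrank_le hPle (le_of_eq h.symm)
    · intro h
      rw [h]
  constructor
  · omega
  constructor
  · intro heq
    have hz : finrank ℝ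
          ↥(((ann ω (ann ω (l ⊔ m))).restrictScalars ℝ).map
              ((l ⊔ m).restrictScalars ℝ).mkQ) = 0 ∧
        finrank ℝ
          ↥(((ann ω (ann ω (ann ω l ⊔ ann ω m))).restrictScalars ℝ).map
              ((ann ω l ⊔ ann ω m).restrictScalars ℝ).mkQ) = 0 ∧
        finrank ℂ ↥(l ⊓ m) = finrank ℂ ↥(ann ω (ann ω l ⊔ ann ω m)) := by
      omega
    refine ⟨hd1.1 hz.1, hd2.1 hz.2.1, ?_⟩
    have h3 := hz3iff.1 hz.2.2
    rw [h3, ann_sup]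
  · rintro ⟨h1, h2, h3⟩
    have hz1 := hd1.2 h1
    have hz2 := hd2.2 h2
    have hz3 : finrank ℂ ↥(l ⊓ m) = finrank ℂ ↥(ann ω (ann ω l ⊔ ann ω m)) := by
      rw [hz3iff.2]
      rw [ann_sup]
      exact h3
    omega
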